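/- Consider the closed-loop interconnection x_{k+1} = A x_k + B u_k, y_k = C x_k + D u_k + d, u_{k+1} = u_k − η(∇Φ¹(u_k) + H_diag ∇Φ²(y_k)), with σ_max(A) < 1, and assume m > c where m = m_u + σ_min(H)² m_y and c = σ_max(H − H_diag) σ_max(H) L_y for the steady-state sensitivity H = C(I − A)⁻¹B + D. Let u∞ be the unique point with ∇Φ¹(u∞) + H_diag ∇Φ²(Hu∞ + d) = 0 and H_x = (I − A)⁻¹B. Then there exists η* > 0 such that for every η with 0 < η < η*, there exists λ ∈ [0, 1) such that for every k ≥ 0 and every initial condition (x₀, u₀), ‖x_k − H_x u_k‖² + ‖u_k − u∞‖² ≤ λ^k (‖x₀ − H_x u₀‖² + ‖u₀ − u∞‖²). -/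

import Mathlib

/-!
Measure the plant by its distance `z = x - H_x u` from the steady-state manifold and the
controller by its error `e = u - u∞`. The controller's direction at steady state,
`v ↦ ∇Φ¹(v) + H_diag ∇Φ²(H v + d)`, is `(m - c)`-strongly monotone and Lipschitz, so the step
`e ↦ e - η g` contracts up to a perturbation of size `O(‖z‖)` caused by the plant not being at
steady state, while `z ↦ A z + η H_x g` contracts at rate `σ_max(A)` up to a perturbation of
size `O(η)`. For small `η` both couplings are dominated, and `‖z‖² + ‖e‖²` decays geometrically.
-/

open RealInnerProductSpace

/-- Largest singular value of a square matrix: the operator 2-norm of `v ↦ M v`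
on Euclidean space. -/
noncomputable def sigmaMax {N : ℕ} (M : Matrix (Fin N) (Fin N) ℝ) : ℝ :=
  ‖Matrix.toEuclideanCLM (𝕜 := ℝ) M‖

/-- Smallest singular value of a square matrix: the infimum of `‖M v‖` over the
unit sphere of Euclidean space. -/
noncomputable def sigmaMin {N : ℕ} (M : Matrix (Fin N) (Fin N) ℝ) : ℝ :=
  sInf ((fun v : EuclideanSpace ℝ (Fin N) => ‖Matrix.toEuclideanCLM (𝕜 := ℝ) M v‖) '' {v | ‖v‖ = 1})

/-- Matrix-vector multiplication as a map on Euclidean space. -/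
noncomputable def mulV {N : ℕ} (M : Matrix (Fin N) (Fin N) ℝ) (v : EuclideanSpace ℝ (Fin N)) :
    EuclideanSpace ℝ (Fin N) :=
  Matrix.toEuclideanCLM (𝕜 := ℝ) M v

section MatrixOperator

variable {N : ℕ}

lemma sigmaMax_nonneg (M : Matrix (Fin N) (Fin N) ℝ) : 0 ≤ sigmaMax M := norm_nonneg _

lemma norm_mulV_le (M : Matrix (Fin N) (Fin N) ℝ) (v : EuclideanSpace ℝ (Fin N)) :
    ‖mulV M v‖ ≤ sigmaMax M * ‖v‖ :=
  (Matrix.toEuclideanCLM (𝕜 := ℝ) M).le_opNorm v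

lemma sigmaMin_nonneg (M : Matrix (Fin N) (Fin N) ℝ) : 0 ≤ sigmaMin M :=
  Real.sInf_nonneg (by rintro _ ⟨v, -, rfl⟩; exact norm_nonneg _)

lemma sigmaMin_mul_norm_le (M : Matrix (Fin N) (Fin N) ℝ) (v : EuclideanSpace ℝ (Fin N)) :
    sigmaMin M * ‖v‖ ≤ ‖mulV M v‖ := by
  rcases eq_or_ne v 0 with rfl | hv
  · simp
  have hv' : 0 < ‖v‖ := norm_pos_iff.mpr hv
  have hunit : ‖‖v‖⁻¹ • v‖ = 1 := by
    rw [norm_smul, norm_inv, norm_norm, inv_mul_cancel₀ hv'.ne']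
  have hle : sigmaMin M ≤ ‖mulV M (‖v‖⁻¹ • v)‖ :=
    csInf_le ⟨0, by rintro _ ⟨w, -, rfl⟩; exact norm_nonneg _⟩ ⟨_, hunit, rfl⟩
  rwa [mulV, map_smul, norm_smul, norm_inv, norm_norm, ← div_eq_inv_mul, le_div_iff₀ hv'] at hle

lemma mulV_sub (M : Matrix (Fin N) (Fin N) ℝ) (v w : EuclideanSpace ℝ (Fin N)) :
    mulV M (v - w) = mulV M v - mulV M w := map_sub _ _ _

lemma mulV_smul (M : Matrix (Fin N) (Fin N) ℝ) (r : ℝ) (v : EuclideanSpace ℝ (Fin N)) :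
    mulV M (r • v) = r • mulV M v := map_smul _ _ _

lemma add_mulV (M₁ M₂ : Matrix (Fin N) (Fin N) ℝ) (v : EuclideanSpace ℝ (Fin N)) :
    mulV (M₁ + M₂) v = mulV M₁ v + mulV M₂ v := by
  simp [mulV, map_add]

lemma sub_mulV (M₁ M₂ : Matrix (Fin N) (Fin N) ℝ) (v : EuclideanSpace ℝ (Fin N)) :
    mulV (M₁ - M₂) v = mulV M₁ v - mulV M₂ v := by
  simp [mulV, map_sub]

lemma mulV_mulV (M₁ M₂ : Matrix (Fin N) (Fin N) ℝ) (v : EuclideanSpace ℝ (Fin N)) :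
    mulV M₁ (mulV M₂ v) = mulV (M₁ * M₂) v := by
  simp [mulV, map_mul]

lemma inner_mulV_left_of_isHermitian {M : Matrix (Fin N) (Fin N) ℝ} (hM : M.IsHermitian)
    (v w : EuclideanSpace ℝ (Fin N)) : ⟪mulV M v, w⟫ = ⟪v, mulV M w⟫ := by
  have hadj : ContinuousLinearMap.adjoint (Matrix.toEuclideanCLM (𝕜 := ℝ) M) =
      Matrix.toEuclideanCLM (𝕜 := ℝ) M := by
    rw [← ContinuousLinearMap.star_eq_adjoint, ← map_star, Matrix.star_eq_conjTranspose, hM]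
  rw [mulV, ← hadj, ContinuousLinearMap.adjoint_inner_left]
  rfl

lemma isUnit_det_one_sub_of_sigmaMax_lt_one {A : Matrix (Fin N) (Fin N) ℝ}
    (hA : sigmaMax A < 1) : IsUnit (1 - A).det := by
  have h : IsUnit (Matrix.toEuclideanCLM (𝕜 := ℝ) (1 - A)) := by
    rw [map_sub, map_one]
    exact (Units.oneSub _ hA).isUnit
  exact (Matrix.isUnit_iff_isUnit_det _).mp ((isUnit_map_iff _ _).mp h)

end MatrixOperator

section SmallGain

variable {E : Type*} [NormedAddCommGroup E] [InnerProductSpace ℝ E]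

/-- With `δ = 1 - a ^ 2`, the constant collecting all `η ^ 2` terms of the small-gain estimate:
`(1 + 2a²/δ) h² (L² + κ²)` from the state error, `4κ²/δ` from the cross term and `L² + κ²`
from `‖g‖²`. -/
noncomputable def smallGainConst (a h L κ : ℝ) : ℝ :=
  ((1 + 2 * a ^ 2 / (1 - a ^ 2)) * h ^ 2 + 1) * (L ^ 2 + κ ^ 2) + 4 * κ ^ 2 / (1 - a ^ 2)

lemma smallGainConst_nonneg {a : ℝ} (ha : a ^ 2 < 1) (h L κ : ℝ) :
    0 ≤ smallGainConst a h L κ := by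
  have hδ : 0 < 1 - a ^ 2 := sub_pos.mpr ha
  unfold smallGainConst
  positivity

lemma sq_add_norm_sub_smul_sq_le {a h L κ μ η z z' : ℝ} {e g : E} (ha : a ^ 2 < 1)
    (hh : 0 ≤ h) (hη : 0 < η) (hz' : 0 ≤ z') (hz'le : z' ≤ a * z + η * h * ‖g‖)
    (hg : ‖g‖ ≤ L * ‖e‖ + κ * z) (hge : μ * ‖e‖ ^ 2 - κ * z * ‖e‖ ≤ ⟪g, e⟫) :
    z' ^ 2 + ‖e - η • g‖ ^ 2 ≤
      (1 - (1 - a ^ 2) / 4 + η ^ 2 * smallGainConst a h L κ) * z ^ 2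
        + (1 - 2 * η * μ + η ^ 2 * smallGainConst a h L κ) * ‖e‖ ^ 2 := by
  set δ := 1 - a ^ 2 with hδ_def
  set K := smallGainConst a h L κ
  have hδ : 0 < δ := sub_pos.mpr ha
  set P := L * ‖e‖ + κ * z
  have hP : P ^ 2 ≤ (L ^ 2 + κ ^ 2) * (z ^ 2 + ‖e‖ ^ 2) := by
    nlinarith [sq_nonneg (L * z - κ * ‖e‖)]
  have hgP : ‖g‖ ^ 2 ≤ P ^ 2 := pow_le_pow_left₀ (norm_nonneg g) hg 2
  have hz'sq : z' ^ 2 ≤ (a * z + η * h * P) ^ 2 := by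
    have : η * h * ‖g‖ ≤ η * h * P := mul_le_mul_of_nonneg_left hg (by positivity)
    exact pow_le_pow_left₀ hz' (by linarith) 2
  have hstate : 2 * z * (a * (η * h * P)) ≤ δ / 2 * z ^ 2 + 2 * a ^ 2 / δ * (η * h * P) ^ 2 := by
    have hyoung := two_mul_le_add_mul_sq (half_pos hδ) (a := z) (b := a * (η * h * P))
    have hcoef : (δ / 2)⁻¹ * (a * (η * h * P)) ^ 2 = 2 * a ^ 2 / δ * (η * h * P) ^ 2 := by
      field_simp
    linarith
  have hcross : 2 * z * (η * κ * ‖e‖) ≤ δ / 4 * z ^ 2 + 4 * κ ^ 2 / δ * (η ^ 2 * ‖e‖ ^ 2) := by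
    have hyoung := two_mul_le_add_mul_sq (by positivity : 0 < δ / 4) (a := z) (b := η * κ * ‖e‖)
    have hcoef : (δ / 4)⁻¹ * (η * κ * ‖e‖) ^ 2 = 4 * κ ^ 2 / δ * (η ^ 2 * ‖e‖ ^ 2) := by
      field_simp
    linarith
  have hcontroller : ‖e - η • g‖ ^ 2 = ‖e‖ ^ 2 - 2 * η * ⟪g, e⟫ + η ^ 2 * ‖g‖ ^ 2 := by
    rw [norm_sub_sq_real, real_inner_smul_right, norm_smul, Real.norm_eq_abs, abs_of_pos hη,
      real_inner_comm]
    ring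
  have hK : K = ((1 + 2 * a ^ 2 / δ) * h ^ 2 + 1) * (L ^ 2 + κ ^ 2) + 4 * κ ^ 2 / δ := rfl
  have hcoupling := mul_le_mul_of_nonneg_left hP
    (by positivity : (0 : ℝ) ≤ (1 + 2 * a ^ 2 / δ) * η ^ 2 * h ^ 2)
  have hdirection := mul_le_mul_of_nonneg_left (hgP.trans hP) (sq_nonneg η)
  have hmonotone := mul_le_mul_of_nonneg_left hge (by positivity : (0 : ℝ) ≤ 2 * η)
  have hcross_z : 0 ≤ 4 * κ ^ 2 / δ * (η ^ 2 * z ^ 2) := by positivity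
  have ha_z : a ^ 2 * z ^ 2 = (1 - δ) * z ^ 2 := by rw [hδ_def]; ring
  rw [hcontroller, hK]
  linarith

/-- One step of the coupled error dynamics contracts at rate `lam`: `z` bounds the plant's
error, `e` is the controller's error and `g` its update direction, which is `μ`-strongly
monotone along `e` up to a perturbation of size `κ z`. -/
def IsSmallGainContraction (E : Type*) [NormedAddCommGroup E] [InnerProductSpace ℝ E]
    (a h L κ μ η lam : ℝ) : Prop :=
  ∀ (z z' : ℝ) (e g : E), 0 ≤ z' → z' ≤ a * z + η * h * ‖g‖ → ‖g‖ ≤ L * ‖e‖ + κ * z →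
    μ * ‖e‖ ^ 2 - κ * z * ‖e‖ ≤ ⟪g, e⟫ → z' ^ 2 + ‖e - η • g‖ ^ 2 ≤ lam * (z ^ 2 + ‖e‖ ^ 2)

theorem exists_stepSize_isSmallGainContraction {a h L κ μ : ℝ} (ha : a ^ 2 < 1) (hh : 0 ≤ h)
    (hμ : 0 < μ) :
    ∃ ηstar : ℝ, 0 < ηstar ∧ ∀ η : ℝ, 0 < η → η < ηstar →
      ∃ lam : ℝ, 0 ≤ lam ∧ lam < 1 ∧ IsSmallGainContraction E a h L κ μ η lam := by
  set δ := 1 - a ^ 2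
  set K := smallGainConst a h L κ
  have hδ : 0 < δ := sub_pos.mpr ha
  have hK : 0 ≤ K := smallGainConst_nonneg ha h L κ
  -- `δ / (8μ)` lets the controller's rate `1 - 2ημ` absorb the plant's `1 - δ/4`;
  -- `μ / (K + 1)` keeps the `η²K` loss below the `2ημ` gain.
  refine ⟨min (δ / (8 * μ)) (μ / (K + 1)), by positivity, fun η hη hηlt => ?_⟩
  have hηδ : 8 * μ * η < δ := by
    have := (lt_min_iff.mp hηlt).1
    rwa [lt_div_iff₀ (by positivity), mul_comm] at this
  have hηK : η * (K + 1) < μ := (lt_div_iff₀ (by positivity)).mp (lt_min_iff.mp hηlt).2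
  refine ⟨1 - 2 * η * μ + η ^ 2 * K, by nlinarith, by nlinarith, ?_⟩
  intro z z' e g hz' hz'le hg hge
  have hzcoef : 1 - δ / 4 + η ^ 2 * K ≤ 1 - 2 * η * μ + η ^ 2 * K := by linarith
  calc z' ^ 2 + ‖e - η • g‖ ^ 2
      ≤ (1 - δ / 4 + η ^ 2 * K) * z ^ 2 + (1 - 2 * η * μ + η ^ 2 * K) * ‖e‖ ^ 2 :=
        sq_add_norm_sub_smul_sq_le ha hh hη hz' hz'le hg hge
    _ ≤ (1 - 2 * η * μ + η ^ 2 * K) * (z ^ 2 + ‖e‖ ^ 2) := by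
        linarith [mul_le_mul_of_nonneg_right hzcoef (sq_nonneg z)]

end SmallGain

section DecentralizedGradient

variable {N : ℕ} (f₁ f₂ : EuclideanSpace ℝ (Fin N) → EuclideanSpace ℝ (Fin N))
  (H Hdiag : Matrix (Fin N) (Fin N) ℝ) (d : EuclideanSpace ℝ (Fin N))

/-- The controller's update direction at the steady-state output `y = H v + d`: the gradient
`f₁ v + Hᵀ f₂ (H v + d)` of the steady-state cost, with `Hᵀ` replaced by `Hdiag`. -/
noncomputable def decentralizedGradient (v : EuclideanSpace ℝ (Fin N)) :
    EuclideanSpace ℝ (Fin N) :=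
  f₁ v + mulV Hdiag (f₂ (mulV H v + d))

lemma decentralizedGradient_sub (p q : EuclideanSpace ℝ (Fin N)) :
    decentralizedGradient f₁ f₂ H Hdiag d p - decentralizedGradient f₁ f₂ H Hdiag d q =
      (f₁ p - f₁ q) + mulV Hdiag (f₂ (mulV H p + d) - f₂ (mulV H q + d)) := by
  rw [decentralizedGradient, decentralizedGradient, mulV_sub]
  abel

variable {f₂ H d} in
lemma norm_sub_comp_affine_le {Ly : ℝ} (hLy : 0 ≤ Ly)
    (hf₂ : ∀ a b, ‖f₂ a - f₂ b‖ ≤ Ly * ‖a - b‖) (p q : EuclideanSpace ℝ (Fin N)) :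
    ‖f₂ (mulV H p + d) - f₂ (mulV H q + d)‖ ≤ Ly * sigmaMax H * ‖p - q‖ := by
  calc ‖f₂ (mulV H p + d) - f₂ (mulV H q + d)‖ ≤ Ly * ‖mulV H (p - q)‖ := by
        simpa [mulV_sub] using hf₂ (mulV H p + d) (mulV H q + d)
    _ ≤ Ly * sigmaMax H * ‖p - q‖ := by
        rw [mul_assoc]; exact mul_le_mul_of_nonneg_left (norm_mulV_le H _) hLy

variable {f₁ f₂ H Hdiag d}

lemma decentralizedGradient_lipschitz {Lu Ly : ℝ} (hLy : 0 ≤ Ly)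
    (hf₁ : ∀ a b, ‖f₁ a - f₁ b‖ ≤ Lu * ‖a - b‖) (hf₂ : ∀ a b, ‖f₂ a - f₂ b‖ ≤ Ly * ‖a - b‖)
    (p q : EuclideanSpace ℝ (Fin N)) :
    ‖decentralizedGradient f₁ f₂ H Hdiag d p - decentralizedGradient f₁ f₂ H Hdiag d q‖ ≤
      (Lu + sigmaMax Hdiag * (Ly * sigmaMax H)) * ‖p - q‖ := by
  rw [decentralizedGradient_sub]
  calc _ ≤ ‖f₁ p - f₁ q‖ + sigmaMax Hdiag * ‖f₂ (mulV H p + d) - f₂ (mulV H q + d)‖ :=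
        (norm_add_le _ _).trans (add_le_add le_rfl (norm_mulV_le _ _))
    _ ≤ Lu * ‖p - q‖ + sigmaMax Hdiag * (Ly * sigmaMax H * ‖p - q‖) :=
        add_le_add (hf₁ p q)
          (mul_le_mul_of_nonneg_left (norm_sub_comp_affine_le hLy hf₂ p q) (sigmaMax_nonneg _))
    _ = (Lu + sigmaMax Hdiag * (Ly * sigmaMax H)) * ‖p - q‖ := by ring

/-- Writing `Hdiag = H - (H - Hdiag)`, the `H` part contributes the strong monotonicity of
`f₂ ∘ (H · + d)`, at least `σ_min(H)² my`, and the off-diagonal part costs at most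
`σ_max(H - Hdiag) σ_max(H) Ly`. -/
lemma decentralizedGradient_strongMono {mu my Ly : ℝ} (hmy : 0 ≤ my) (hLy : 0 ≤ Ly)
    (hHdiag : Hdiag.IsHermitian)
    (hf₁ : ∀ a b, mu * ‖a - b‖ ^ 2 ≤ ⟪f₁ a - f₁ b, a - b⟫)
    (hf₂mono : ∀ a b, my * ‖a - b‖ ^ 2 ≤ ⟪f₂ a - f₂ b, a - b⟫)
    (hf₂lip : ∀ a b, ‖f₂ a - f₂ b‖ ≤ Ly * ‖a - b‖) (p q : EuclideanSpace ℝ (Fin N)) :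
    (mu + sigmaMin H ^ 2 * my - sigmaMax (H - Hdiag) * sigmaMax H * Ly) * ‖p - q‖ ^ 2 ≤
      ⟪decentralizedGradient f₁ f₂ H Hdiag d p - decentralizedGradient f₁ f₂ H Hdiag d q,
        p - q⟫ := by
  set Δ := f₂ (mulV H p + d) - f₂ (mulV H q + d)
  have hsplit : ⟪mulV Hdiag Δ, p - q⟫ = ⟪Δ, mulV H (p - q)⟫ - ⟪Δ, mulV (H - Hdiag) (p - q)⟫ := by
    rw [inner_mulV_left_of_isHermitian hHdiag, ← inner_sub_right, ← sub_mulV, sub_sub_cancel]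
  have hdiag : my * (sigmaMin H ^ 2 * ‖p - q‖ ^ 2) ≤ ⟪Δ, mulV H (p - q)⟫ := by
    have hσ : (sigmaMin H * ‖p - q‖) ^ 2 ≤ ‖mulV H (p - q)‖ ^ 2 :=
      pow_le_pow_left₀ (by have := sigmaMin_nonneg H; positivity) (sigmaMin_mul_norm_le H _) 2
    have hmono := hf₂mono (mulV H p + d) (mulV H q + d)
    rw [add_sub_add_right_eq_sub, ← mulV_sub] at hmono
    linarith [mul_le_mul_of_nonneg_left hσ hmy]
  have hoff : ⟪Δ, mulV (H - Hdiag) (p - q)⟫ ≤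
      sigmaMax (H - Hdiag) * sigmaMax H * Ly * ‖p - q‖ ^ 2 := by
    have hΔ := norm_sub_comp_affine_le (d := d) (H := H) hLy hf₂lip p q
    calc ⟪Δ, mulV (H - Hdiag) (p - q)⟫ ≤ ‖Δ‖ * ‖mulV (H - Hdiag) (p - q)‖ :=
          real_inner_le_norm _ _
      _ ≤ (Ly * sigmaMax H * ‖p - q‖) * (sigmaMax (H - Hdiag) * ‖p - q‖) :=
          mul_le_mul hΔ (norm_mulV_le _ _) (norm_nonneg _) ((norm_nonneg _).trans hΔ)
      _ = sigmaMax (H - Hdiag) * sigmaMax H * Ly * ‖p - q‖ ^ 2 := by ring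
  rw [decentralizedGradient_sub, inner_add_left, hsplit]
  linarith [hf₁ p q]

end DecentralizedGradient

section ClosedLoop

variable {N : ℕ} {A B C D Hx H Hdiag : Matrix (Fin N) (Fin N) ℝ}

lemma norm_stateError_succ_le (hAB : A * Hx + B = Hx) {η : ℝ} (hη : 0 ≤ η)
    (x u g : EuclideanSpace ℝ (Fin N)) :
    ‖mulV A x + mulV B u - mulV Hx (u - η • g)‖ ≤
      sigmaMax A * ‖x - mulV Hx u‖ + η * sigmaMax Hx * ‖g‖ := by
  have hrec : mulV A x + mulV B u - mulV Hx (u - η • g) =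
      mulV A (x - mulV Hx u) + η • mulV Hx g := by
    have hB : mulV B u = mulV Hx u - mulV A (mulV Hx u) := by
      rw [eq_sub_iff_add_eq, mulV_mulV, add_comm, ← add_mulV, hAB]
    rw [mulV_sub, mulV_sub, mulV_smul, hB]
    abel
  rw [hrec, mul_assoc]
  refine (norm_add_le _ _).trans (add_le_add (norm_mulV_le _ _) ?_)
  rw [norm_smul, Real.norm_of_nonneg hη]
  exact mul_le_mul_of_nonneg_left (norm_mulV_le _ _) hη

lemma norm_outputPerturbation_le (hCD : C * Hx + D = H)
    {f₂ : EuclideanSpace ℝ (Fin N) → EuclideanSpace ℝ (Fin N)} {Ly : ℝ} (hLy : 0 ≤ Ly)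
    (hf₂ : ∀ a b, ‖f₂ a - f₂ b‖ ≤ Ly * ‖a - b‖) (d x u : EuclideanSpace ℝ (Fin N)) :
    ‖mulV Hdiag (f₂ (mulV C x + mulV D u + d) - f₂ (mulV H u + d))‖ ≤
      sigmaMax Hdiag * Ly * sigmaMax C * ‖x - mulV Hx u‖ := by
  have hout : mulV C x + mulV D u + d - (mulV H u + d) = mulV C (x - mulV Hx u) := by
    rw [mulV_sub, mulV_mulV, ← hCD, add_mulV]
    abel
  calc _ ≤ sigmaMax Hdiag * (Ly * ‖mulV C (x - mulV Hx u)‖) := by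
        rw [← hout]
        exact (norm_mulV_le _ _).trans (mul_le_mul_of_nonneg_left (hf₂ _ _) (sigmaMax_nonneg _))
    _ ≤ sigmaMax Hdiag * (Ly * (sigmaMax C * ‖x - mulV Hx u‖)) := by
        gcongr
        · exact sigmaMax_nonneg _
        · exact norm_mulV_le _ _
    _ = sigmaMax Hdiag * Ly * sigmaMax C * ‖x - mulV Hx u‖ := by ring

lemma closedLoop_step_le (hAB : A * Hx + B = Hx) (hCD : C * Hx + D = H)
    {f₁ f₂ : EuclideanSpace ℝ (Fin N) → EuclideanSpace ℝ (Fin N)}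
    {d uinf : EuclideanSpace ℝ (Fin N)} {μ L Ly η lam : ℝ} (hLy : 0 ≤ Ly)
    (hf₂ : ∀ a b, ‖f₂ a - f₂ b‖ ≤ Ly * ‖a - b‖)
    (hF0 : decentralizedGradient f₁ f₂ H Hdiag d uinf = 0)
    (hFmono : ∀ p q, μ * ‖p - q‖ ^ 2 ≤ ⟪decentralizedGradient f₁ f₂ H Hdiag d p -
      decentralizedGradient f₁ f₂ H Hdiag d q, p - q⟫)
    (hFlip : ∀ p q, ‖decentralizedGradient f₁ f₂ H Hdiag d p -
      decentralizedGradient f₁ f₂ H Hdiag d q‖ ≤ L * ‖p - q‖) (hη : 0 ≤ η)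
    (hcontr : IsSmallGainContraction (EuclideanSpace ℝ (Fin N)) (sigmaMax A) (sigmaMax Hx) L
      (sigmaMax Hdiag * Ly * sigmaMax C) μ η lam)
    {x u y x' u' : EuclideanSpace ℝ (Fin N)} (hx' : x' = mulV A x + mulV B u)
    (hy : y = mulV C x + mulV D u + d) (hu' : u' = u - η • (f₁ u + mulV Hdiag (f₂ y))) :
    ‖x' - mulV Hx u'‖ ^ 2 + ‖u' - uinf‖ ^ 2 ≤
      lam * (‖x - mulV Hx u‖ ^ 2 + ‖u - uinf‖ ^ 2) := by
  subst hx' hy hu'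
  have hmono := hFmono u uinf
  have hlip := hFlip u uinf
  rw [hF0, sub_zero] at hmono hlip
  set g := f₁ u + mulV Hdiag (f₂ (mulV C x + mulV D u + d))
  set r := mulV Hdiag (f₂ (mulV C x + mulV D u + d) - f₂ (mulV H u + d))
  have hg : g = decentralizedGradient f₁ f₂ H Hdiag d u + r := by
    simp only [g, r, decentralizedGradient, mulV_sub]
    abel
  have hr : ‖r‖ ≤ _ := norm_outputPerturbation_le hCD hLy hf₂ d x u
  have hgnorm : ‖g‖ ≤ L * ‖u - uinf‖ + sigmaMax Hdiag * Ly * sigmaMax C * ‖x - mulV Hx u‖ :=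
    hg ▸ (norm_add_le _ _).trans (add_le_add hlip hr)
  have hginner : μ * ‖u - uinf‖ ^ 2 -
      sigmaMax Hdiag * Ly * sigmaMax C * ‖x - mulV Hx u‖ * ‖u - uinf‖ ≤ ⟪g, u - uinf⟫ := by
    rw [hg, inner_add_left]
    have := neg_le_of_abs_le (abs_real_inner_le_norm r (u - uinf))
    linarith [hmono, mul_le_mul_of_nonneg_right hr (norm_nonneg (u - uinf))]
  rw [sub_right_comm]
  exact hcontr _ _ _ g (norm_nonneg _) (norm_stateError_succ_le hAB hη x u g) hgnorm hginner

end ClosedLoop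

theorem stmt11_general {N : ℕ}
    (A B C D : Matrix (Fin N) (Fin N) ℝ) (hA : sigmaMax A < 1)
    (d : EuclideanSpace ℝ (Fin N))
    (Φ1 Φ2 : EuclideanSpace ℝ (Fin N) → ℝ)
    (mu Lu my Ly : ℝ)
    (hmy : 0 < my) (hmyLy : my ≤ Ly)
    (hΦ1mono : ∀ a b, mu * ‖a - b‖ ^ 2 ≤ ⟪gradient Φ1 a - gradient Φ1 b, a - b⟫)
    (hΦ1lip : ∀ a b, ‖gradient Φ1 a - gradient Φ1 b‖ ≤ Lu * ‖a - b‖)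
    (hΦ2mono : ∀ a b, my * ‖a - b‖ ^ 2 ≤ ⟪gradient Φ2 a - gradient Φ2 b, a - b⟫)
    (hΦ2lip : ∀ a b, ‖gradient Φ2 a - gradient Φ2 b‖ ≤ Ly * ‖a - b‖)
    (Hx H Hdiag : Matrix (Fin N) (Fin N) ℝ)
    (hHx : Hx = (1 - A)⁻¹ * B)
    (hH : H = C * Hx + D)
    (hHdiag : Hdiag = Matrix.diagonal (fun i => H i i))
    (m c : ℝ)
    (hm : m = mu + sigmaMin H ^ 2 * my)
    (hc : c = sigmaMax (H - Hdiag) * sigmaMax H * Ly)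
    (hmc : m > c)
    (uinf : EuclideanSpace ℝ (Fin N))
    (huinf : gradient Φ1 uinf + mulV Hdiag (gradient Φ2 (mulV H uinf + d)) = 0) :
    ∃ ηstar : ℝ, 0 < ηstar ∧
      ∀ η : ℝ, 0 < η → η < ηstar →
        ∃ lam : ℝ, 0 ≤ lam ∧ lam < 1 ∧
          ∀ x u y : ℕ → EuclideanSpace ℝ (Fin N),
            (∀ k, x (k + 1) = mulV A (x k) + mulV B (u k)) →
            (∀ k, y k = mulV C (x k) + mulV D (u k) + d) →
            (∀ k, u (k + 1) = u k - η • (gradient Φ1 (u k) + mulV Hdiag (gradient Φ2 (y k)))) →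
            ∀ k : ℕ,
              ‖x k - mulV Hx (u k)‖ ^ 2 + ‖u k - uinf‖ ^ 2 ≤
                lam ^ k * (‖x 0 - mulV Hx (u 0)‖ ^ 2 + ‖u 0 - uinf‖ ^ 2) := by
  subst hm hc
  have hLy : 0 ≤ Ly := hmy.le.trans hmyLy
  have hAB : A * Hx + B = Hx := by
    rw [← Matrix.mul_nonsing_inv_cancel_left (1 - A) B (isUnit_det_one_sub_of_sigmaMax_lt_one hA),
      ← hHx, sub_mul, one_mul, add_sub_cancel]
  have ha : sigmaMax A ^ 2 < 1 := by nlinarith [sigmaMax_nonneg A]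
  obtain ⟨ηstar, hηstar, hcontr⟩ := exists_stepSize_isSmallGainContraction
    (E := EuclideanSpace ℝ (Fin N)) (L := Lu + sigmaMax Hdiag * (Ly * sigmaMax H))
    (κ := sigmaMax Hdiag * Ly * sigmaMax C) ha (sigmaMax_nonneg Hx) (sub_pos.mpr hmc)
  refine ⟨ηstar, hηstar, fun η hη hηlt => ?_⟩
  obtain ⟨lam, hlam0, hlam1, hstep⟩ := hcontr η hη hηlt
  refine ⟨lam, hlam0, hlam1, fun x u y hx hy hu k => ?_⟩
  refine le_geom (u := fun j => ‖x j - mulV Hx (u j)‖ ^ 2 + ‖u j - uinf‖ ^ 2) hlam0 k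
    fun j _ => ?_
  exact closedLoop_step_le hAB hH.symm hLy hΦ2lip huinf
    (decentralizedGradient_strongMono hmy.le hLy (hHdiag ▸ Matrix.isHermitian_diagonal _)
      hΦ1mono hΦ2mono hΦ2lip)
    (decentralizedGradient_lipschitz hLy hΦ1lip hΦ2lip) hη.le hstep (hx j) (hy j) (hu j)

/-- Theorem 4: linear convergence of the decentralized controller
interconnected with a stable LTI plant. Under `σ_max(A) < 1` and the diagonal-dominance
condition `m > c` for the steady-state sensitivity `H = C(I − A)⁻¹B + D`, there exists a step
size threshold `η* > 0` such that for all `0 < η < η*` there is a rate `λ ∈ [0, 1)` with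
`‖x_k − H_x u_k‖² + ‖u_k − u∞‖² ≤ λ^k (‖x₀ − H_x u₀‖² + ‖u₀ − u∞‖²)` along the closed loop
`x_{k+1} = Ax_k + Bu_k`, `y_k = Cx_k + Du_k + d`,
`u_{k+1} = u_k − η(∇Φ¹(u_k) + H_diag ∇Φ²(y_k))`. -/
theorem stmt11 {N : ℕ} (hN : 0 < N)
    (A B C D : Matrix (Fin N) (Fin N) ℝ) (hA : sigmaMax A < 1)
    (d : EuclideanSpace ℝ (Fin N))
    (Φ1 Φ2 : EuclideanSpace ℝ (Fin N) → ℝ)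
    (mu Lu my Ly : ℝ)
    (hmu : 0 < mu) (hmuLu : mu ≤ Lu) (hmy : 0 < my) (hmyLy : my ≤ Ly)
    (hΦ1diff : Differentiable ℝ Φ1) (hΦ2diff : Differentiable ℝ Φ2)
    (hΦ1mono : ∀ a b, mu * ‖a - b‖ ^ 2 ≤ ⟪gradient Φ1 a - gradient Φ1 b, a - b⟫)
    (hΦ1lip : ∀ a b, ‖gradient Φ1 a - gradient Φ1 b‖ ≤ Lu * ‖a - b‖)
    (hΦ2mono : ∀ a b, my * ‖a - b‖ ^ 2 ≤ ⟪gradient Φ2 a - gradient Φ2 b, a - b⟫)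
    (hΦ2lip : ∀ a b, ‖gradient Φ2 a - gradient Φ2 b‖ ≤ Ly * ‖a - b‖)
    (Hx H Hdiag : Matrix (Fin N) (Fin N) ℝ)
    (hHx : Hx = (1 - A)⁻¹ * B)
    (hH : H = C * Hx + D)
    (hHdiag : Hdiag = Matrix.diagonal (fun i => H i i))
    (m c : ℝ)
    (hm : m = mu + sigmaMin H ^ 2 * my)
    (hc : c = sigmaMax (H - Hdiag) * sigmaMax H * Ly)
    (hmc : m > c)
    (uinf : EuclideanSpace ℝ (Fin N))
    (huinf : gradient Φ1 uinf + mulV Hdiag (gradient Φ2 (mulV H uinf + d)) = 0) :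
    ∃ ηstar : ℝ, 0 < ηstar ∧
      ∀ η : ℝ, 0 < η → η < ηstar →
        ∃ lam : ℝ, 0 ≤ lam ∧ lam < 1 ∧
          ∀ x u y : ℕ → EuclideanSpace ℝ (Fin N),
            (∀ k, x (k + 1) = mulV A (x k) + mulV B (u k)) →
            (∀ k, y k = mulV C (x k) + mulV D (u k) + d) →
            (∀ k, u (k + 1) = u k - η • (gradient Φ1 (u k) + mulV Hdiag (gradient Φ2 (y k)))) →
            ∀ k : ℕ,
              ‖x k - mulV Hx (u k)‖ ^ 2 + ‖u k - uinf‖ ^ 2 ≤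
                lam ^ k * (‖x 0 - mulV Hx (u 0)‖ ^ 2 + ‖u 0 - uinf‖ ^ 2) :=
  stmt11_general A B C D hA d Φ1 Φ2 mu Lu my Ly hmy hmyLy hΦ1mono hΦ1lip hΦ2mono hΦ2lip Hx H Hdiag
    hHx hH hHdiag m c hm hc hmc uinf huinf
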